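/- arXiv:2005.03441 — 2 statements merged into one kernel-verified Lean document; each statement's English description precedes it below -/
import Mathlib

section
/- Let G be a connected graph that is P5-free, K4-free, W5-free and F-free, and let v1,...,v7 induce a 7-antihole in G, with v_i v_{i+1} (indices modulo 7) the nonedges among them. For each i let T_i be the set of vertices outside the antihole whose neighborhood on {v1,...,v7} is exactly {v_{i−1}, v_i, v_{i+1}}. Then for every i and every t ∈ T_i, N(t) ⊆ N(v_{i−3}) ∪ N(v_{i+3}) (indices modulo 7). -/
open SimpleGraph

/-- `SGFree G H` means `G` contains no induced subgraph isomorphic to `H`,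
i.e. `G` is `H`-free. -/
def SGFree {V : Type*} {W : Type*} (G : SimpleGraph V) (H : SimpleGraph W) : Prop :=
  IsEmpty (H ↪g G)

/-- `G` is `k`-vertex-critical: `χ(G) = k` and `χ(G - v) < k` for every vertex `v`. -/
def IsKVertexCritical {V : Type*} (G : SimpleGraph V) (k : ℕ) : Prop :=
  G.chromaticNumber = (k : ℕ∞) ∧
    ∀ v : V, (G.induce ({v}ᶜ : Set V)).chromaticNumber < (k : ℕ∞)

/-- `2P2`: the disjoint union of two edges, on 4 vertices. -/
def twoP2 : SimpleGraph (Fin 4) := fromEdgeSet {s(0,1), s(2,3)}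

/-- `P1 + K3`: the disjoint union of a vertex and a triangle. -/
def P1K3 : SimpleGraph (Fin 4) := fromEdgeSet {s(1,2), s(1,3), s(2,3)}

/-- `P2 + 2P1`: the disjoint union of an edge and two isolated vertices. -/
def P2plus2P1 : SimpleGraph (Fin 4) := fromEdgeSet {s(0,1)}

/-- `P1 + P3`: the disjoint union of a vertex and a path on 3 vertices. -/
def P1P3 : SimpleGraph (Fin 4) := fromEdgeSet {s(1,2), s(2,3)}

/-- The diamond: `K4` minus an edge. -/
def diamond : SimpleGraph (Fin 4) := fromEdgeSet {s(0,2), s(0,3), s(1,2), s(1,3), s(2,3)}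

/-- The 5-wheel `W5`: a 5-cycle plus a vertex adjacent to all five cycle vertices. -/
def W5 : SimpleGraph (Fin 6) :=
  fromEdgeSet {s(0,1), s(1,2), s(2,3), s(3,4), s(4,0), s(5,0), s(5,1), s(5,2), s(5,3), s(5,4)}

/-- The graph `F`: a 5-cycle plus a vertex adjacent to exactly four of the cycle vertices. -/
def Fgraph : SimpleGraph (Fin 6) :=
  fromEdgeSet {s(0,1), s(1,2), s(2,3), s(3,4), s(4,0), s(5,0), s(5,1), s(5,2), s(5,3)}

/-! A vertex `t` of `T i` forms a triangle with `v (i - 1)` and `v (i + 1)`, so by `K4`-freeness a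
neighbour `u` of `t` misses one of them, say `v (i + 1)`. If `u` also missed `v (i + 3)` and
`v (i - 3)`, then `v (i + 2) - u - t - v (i + 1) - v (i + 3)` (when `u ∼ v (i + 2)`) or
`v (i + 2) - v (i - 3) - v (i + 1) - t - u` (otherwise) would be an induced `P5`. -/

namespace SGFree

variable {V : Type} {G : SimpleGraph V}

theorem cliqueFree {n : ℕ} (h : SGFree G (completeGraph (Fin n))) : G.CliqueFree n :=
  fun _ hs => h.false (topEmbeddingOfNotCliqueFree fun hc => hc _ hs)

theorem false_of_inducedP5 (hP5 : SGFree G (pathGraph 5)) {a b c d e : V}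
    (hab : G.Adj a b) (hbc : G.Adj b c) (hcd : G.Adj c d) (hde : G.Adj d e)
    (hac : ¬G.Adj a c) (had : ¬G.Adj a d) (hae : ¬G.Adj a e)
    (hbd : ¬G.Adj b d) (hbe : ¬G.Adj b e) (hce : ¬G.Adj c e) : False := by
  refine hP5.false ⟨⟨![a, b, c, d, e], ?_⟩, ?_⟩
  · intro x y hxy
    fin_cases x <;> fin_cases y <;> simp_all [G.adj_comm]
  · intro x y
    change G.Adj (![a, b, c, d, e] x) (![a, b, c, d, e] y) ↔ _
    fin_cases x <;> fin_cases y <;> simp_all [pathGraph_adj, G.adj_comm]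

end SGFree

def IsAntihole7 {V : Type} (G : SimpleGraph V) (w : Fin 7 → V) : Prop :=
  ∀ j k : Fin 7, G.Adj (w j) (w k) ↔ (j ≠ k ∧ k ≠ j + 1 ∧ j ≠ k + 1)

namespace IsAntihole7

variable {V : Type} {G : SimpleGraph V} {w : Fin 7 → V}

theorem comp_add_left (hw : IsAntihole7 G w) (i : Fin 7) : IsAntihole7 G (fun k => w (i + k)) := by
  intro j k
  refine (hw _ _).trans ?_
  simp only [ne_eq, add_assoc, add_right_inj]

theorem adj_three_or_four (hw : IsAntihole7 G w)
    (hP5 : SGFree G (pathGraph 5)) (hK4 : SGFree G (completeGraph (Fin 4))) {t u : V}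
    (ht : ∀ k, G.Adj t (w k) ↔ (k = 6 ∨ k = 0 ∨ k = 1)) (htu : G.Adj t u) :
    G.Adj u (w 3) ∨ G.Adj u (w 4) := by
  have hwt : ∀ k, G.Adj (w k) t ↔ (k = 6 ∨ k = 0 ∨ k = 1) :=
    fun k => G.adj_comm _ _ |>.trans (ht k)
  by_contra! ⟨hu3, hu4⟩
  by_cases hu1 : G.Adj u (w 1)
  · by_cases hu6 : G.Adj u (w 6)
    · classical
      refine hK4.cliqueFree {u, t, w 1, w 6} ((is3Clique_triple_iff.2 ⟨?_, ?_, ?_⟩).insert ?_)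
      · rw [ht]; decide
      · rw [ht]; decide
      · rw [hw]; decide
      · simp [htu.symm, hu1, hu6]
    · by_cases hu5 : G.Adj u (w 5)
      · exact hP5.false_of_inducedP5 hu5.symm htu.symm (by rw [ht]; decide)
          (by rw [hw]; decide) (by rw [hwt]; decide) (by rw [hw]; decide) (by rw [hw]; decide)
          hu6 hu4 (by rw [ht]; decide)
      · exact hP5.false_of_inducedP5 (by rw [hw]; decide) (by rw [hw]; decide)
          (by rw [hwt]; decide) htu (by rw [hw]; decide) (by rw [hwt]; decide) (fun h => hu5 h.symm)
          (by rw [hwt]; decide) (fun h => hu3 h.symm) (fun h => hu6 h.symm)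
  · by_cases hu2 : G.Adj u (w 2)
    · exact hP5.false_of_inducedP5 hu2.symm htu.symm (by rw [ht]; decide)
        (by rw [hw]; decide) (by rw [hwt]; decide) (by rw [hw]; decide) (by rw [hw]; decide)
        hu1 hu3 (by rw [ht]; decide)
    · exact hP5.false_of_inducedP5 (by rw [hw]; decide) (by rw [hw]; decide)
        (by rw [hwt]; decide) htu (by rw [hw]; decide) (by rw [hwt]; decide) (fun h => hu2 h.symm)
        (by rw [hwt]; decide) (fun h => hu4 h.symm) (fun h => hu1 h.symm)

end IsAntihole7

theorem stmt_13_general {V : Type} (G : SimpleGraph V)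
    (hP5 : SGFree G (pathGraph 5))
    (hK4 : SGFree G (completeGraph (Fin 4)))
    (v : Fin 7 → V)
    (hadj : ∀ i j : Fin 7, G.Adj (v i) (v j) ↔ (i ≠ j ∧ j ≠ i + 1 ∧ i ≠ j + 1))
    (T : Fin 7 → Set V)
    (hT : ∀ (i : Fin 7) (x : V), x ∈ T i ↔
      x ∉ Set.range v ∧ ∀ j : Fin 7, G.Adj x (v j) ↔ (j = i - 1 ∨ j = i ∨ j = i + 1)) :
    ∀ i : Fin 7, ∀ t ∈ T i,
      G.neighborSet t ⊆ G.neighborSet (v (i - 3)) ∪ G.neighborSet (v (i + 3)) := by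
  intro i t ht u htu
  have triad : ∀ i k : Fin 7,
      i + k = i - 1 ∨ i + k = i ∨ i + k = i + 1 ↔ k = 6 ∨ k = 0 ∨ k = 1 := by
    decide
  have htv : ∀ k, G.Adj t (v (i + k)) ↔ (k = 6 ∨ k = 0 ∨ k = 1) := fun k => by
    rw [((hT i t).1 ht).2, triad]
  rw [(by decide : ∀ i : Fin 7, i - 3 = i + 4) i]
  exact ((IsAntihole7.comp_add_left hadj i).adj_three_or_four hP5 hK4 htv htu).symm.imp
    G.adj_symm G.adj_symm

/-- With `T i` the set of vertices outside a 7-antihole whose neighborhood on it is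
exactly `{v_{i-1}, v_i, v_{i+1}}` in a connected `(P5, K4, W5, F)`-free graph, every
`t ∈ T i` satisfies `N(t) ⊆ N(v_{i-3}) ∪ N(v_{i+3})`. -/
theorem stmt_13 {V : Type} [Fintype V] (G : SimpleGraph V)
    (hconn : G.Connected)
    (hP5 : SGFree G (pathGraph 5))
    (hK4 : SGFree G (completeGraph (Fin 4)))
    (hW5 : SGFree G W5)
    (hF : SGFree G Fgraph)
    (v : Fin 7 → V) (hv : Function.Injective v)
    (hadj : ∀ i j : Fin 7, G.Adj (v i) (v j) ↔ (i ≠ j ∧ j ≠ i + 1 ∧ i ≠ j + 1))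
    (T : Fin 7 → Set V)
    (hT : ∀ (i : Fin 7) (x : V), x ∈ T i ↔
      x ∉ Set.range v ∧ ∀ j : Fin 7, G.Adj x (v j) ↔ (j = i - 1 ∨ j = i ∨ j = i + 1)) :
    ∀ i : Fin 7, ∀ t ∈ T i,
      G.neighborSet t ⊆ G.neighborSet (v (i - 3)) ∪ G.neighborSet (v (i + 3)) :=
  stmt_13_general G hP5 hK4 v hadj T hT
end

section
/- Let k ≥ 1 and let G be a k-vertex-critical (P5, diamond)-free graph containing an induced 5-cycle on vertices v1,...,v5. Let Z be the set of vertices of G outside {v1,...,v5} having no neighbor in {v1,...,v5}. Then Z is an independent set and |Z| ≤ 32. -/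
open SimpleGraph

/-!
Vertex-criticality supplies three tools: `G` is connected, no vertex has its neighbourhood
inside that of another vertex, and a vertex whose neighbourhood is a clique is adjacent to every
other vertex. Forbidding `P5` and the diamond pins down the vertices near the cycle: every vertex
of `Z` has a neighbour `s` touching the cycle, and every such `s` is adjacent on the cycle to
exactly an edge `vᵢvᵢ₊₁` and the opposite vertex `vᵢ₊₃` (its type `i`); each type has at most
one vertex, and no two such vertices are adjacent. If two vertices of `Z` were adjacent, the
neighbourhood of one of them would be a clique, which is impossible since it misses the cycle.
So `Z` is independent, and a vertex `z ∈ Z` is determined by the set of `i` for which it has a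
neighbour of type `i`: a private neighbour of `z` over another vertex of `Z` has a type, and is
the only vertex of that type. This leaves at most `2⁵ = 32` vertices in `Z`.
-/

namespace SGFree

variable {V : Type*} {G : SimpleGraph V}

theorem false_of_inducedPath (h : SGFree G (pathGraph 5)) {a b c d e : V}
    (hab : G.Adj a b) (hbc : G.Adj b c) (hcd : G.Adj c d) (hde : G.Adj d e)
    (hac : ¬G.Adj a c) (had : ¬G.Adj a d) (hae : ¬G.Adj a e)
    (hbd : ¬G.Adj b d) (hbe : ¬G.Adj b e) (hce : ¬G.Adj c e) : False := by
  refine h.false ⟨⟨![a, b, c, d, e], ?_⟩, ?_⟩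
  · intro i j hij
    fin_cases i <;> fin_cases j <;> simp_all [G.adj_comm]
  · intro i j
    change G.Adj (![a, b, c, d, e] i) (![a, b, c, d, e] j) ↔ _
    fin_cases i <;> fin_cases j <;> simp_all [G.adj_comm, pathGraph_adj]

theorem false_of_inducedDiamond (h : SGFree G diamond) {a b c d : V} (hab : a ≠ b)
    (hnab : ¬G.Adj a b) (hac : G.Adj a c) (had : G.Adj a d) (hbc : G.Adj b c)
    (hbd : G.Adj b d) (hcd : G.Adj c d) : False := by
  refine h.false ⟨⟨![a, b, c, d], ?_⟩, ?_⟩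
  · intro i j hij
    fin_cases i <;> fin_cases j <;> simp_all [hac.ne, had.ne, hbc.ne, hbd.ne, hcd.ne]
  · intro i j
    change G.Adj (![a, b, c, d] i) (![a, b, c, d] j) ↔ _
    fin_cases i <;> fin_cases j <;> simp_all [G.adj_comm, diamond]

theorem isClique_neighborSet (h : SGFree G diamond) {z s : V} (hzs : G.Adj z s)
    (hs : ∀ w, G.Adj z w → w ≠ s → G.Adj w s) : G.IsClique (G.neighborSet z) := by
  intro w hw w' hw' hne
  by_cases hws : w = s
  · exact hws ▸ (hs w' hw' (hws ▸ hne).symm).symm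
  by_cases hw's : w' = s
  · exact hw's ▸ hs w hw (hw's ▸ hne)
  by_contra hww'
  exact h.false_of_inducedDiamond hne hww' hw.symm (hs w hw hws) hw'.symm (hs w' hw' hw's) hzs

end SGFree

namespace IsKVertexCritical

variable {V : Type*} {G : SimpleGraph V} {k : ℕ}

theorem pos (h : IsKVertexCritical G k) (w : V) : 0 < k := by
  exact_mod_cast pos_of_gt (h.2 w)

theorem colorable_induce_compl (h : IsKVertexCritical G k) (w : V) :
    (G.induce ({w}ᶜ : Set V)).Colorable (k - 1) := by
  have hlt := h.2 w
  rw [← Nat.sub_add_cancel (h.pos w), Nat.cast_add, Nat.cast_one,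
    ENat.lt_add_one_iff (ENat.natCast_ne_top _)] at hlt
  exact chromaticNumber_le_iff_colorable.mp hlt

theorem not_colorable (h : IsKVertexCritical G k) (w : V) : ¬G.Colorable (k - 1) := fun hc => by
  have := hc.chromaticNumber_le
  rw [h.1, Nat.cast_le] at this
  have := h.pos w
  omega

/-- If a colour were missing, `z` could take it. -/
theorem exists_adj_color_eq (h : IsKVertexCritical G k) (z : V)
    (c : (G.induce ({z}ᶜ : Set V)).Coloring (Fin (k - 1))) (a : Fin (k - 1)) :
    ∃ (x : V) (hx : x ≠ z), G.Adj z x ∧ c ⟨x, hx⟩ = a := by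
  classical
  by_contra! hfree
  refine h.not_colorable z ⟨Coloring.mk (fun x => if hx : x = z then a else c ⟨x, hx⟩) ?_⟩
  intro x y hxy
  by_cases hx : x = z <;> by_cases hy : y = z
  · exact (G.ne_of_adj hxy (hx.trans hy.symm)).elim
  · subst hx
    simpa [hy] using (hfree y hy hxy).symm
  · subst hy
    simpa [hx] using hfree x hx hxy.symm
  · simpa [hx, hy] using c.valid (by simpa using hxy)

theorem le_degree (h : IsKVertexCritical G k) (z : V) [Fintype (G.neighborSet z)] :
    k - 1 ≤ G.degree z := by
  obtain ⟨c⟩ := h.colorable_induce_compl z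
  choose f hfz hadj hcol using h.exists_adj_color_eq z c
  rw [← card_neighborSet_eq_degree, ← Fintype.card_fin (k - 1)]
  refine Fintype.card_le_of_injective (fun a => ⟨f a, hadj a⟩) fun a b hab => ?_
  have : (⟨f a, hfz a⟩ : ({z}ᶜ : Set V)) = ⟨f b, hfz b⟩ :=
    Subtype.ext (congrArg Subtype.val hab : f a = f b)
  rw [← hcol a, ← hcol b, this]

/-- Otherwise the closed neighbourhood of `z`, a clique of size at least `k` by `le_degree`,
would survive the deletion of `w`. -/
theorem adj_of_isClique_neighborSet [Fintype V] (h : IsKVertexCritical G k) {z : V}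
    (hcl : G.IsClique (G.neighborSet z)) {w : V} (hwz : w ≠ z) : G.Adj z w := by
  classical
  by_contra hzw
  set s := insert z (G.neighborFinset z)
  have hs : G.IsClique (s : Set V) := by
    simpa [s, isClique_insert] using ⟨hcl, fun x hx _ => hx⟩
  have hws : w ∉ s := by simp [s, hwz, hzw]
  obtain ⟨c⟩ := h.colorable_induce_compl w
  have hs' : (G.induce ({w}ᶜ : Set V)).IsClique (s.subtype (· ∈ ({w}ᶜ : Set V)) : Set _) :=
    fun x hx y hy hxy => hs (by simpa using hx) (by simpa using hy) (Subtype.coe_injective.ne hxy)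
  have hcard := hs'.card_le_of_colorable ⟨c⟩
  rw [Finset.card_subtype, Finset.filter_true_of_mem fun x hx =>
    Set.mem_compl_singleton_iff.mpr (ne_of_mem_of_not_mem hx hws),
    Finset.card_insert_of_notMem (by simp), card_neighborFinset_eq_degree] at hcard
  have := h.le_degree z
  have := h.pos z
  omega

theorem exists_adj_not_adj (h : IsKVertexCritical G k) {z z' : V} (hne : z ≠ z') :
    ∃ x, G.Adj z x ∧ ¬G.Adj z' x := by
  by_contra! hdom
  obtain ⟨c⟩ := h.colorable_induce_compl z
  obtain ⟨x, hxz, hzx, hcx⟩ := h.exists_adj_color_eq z c (c ⟨z', hne.symm⟩)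
  exact c.valid (by simpa using (hdom x hzx).symm) hcx

theorem preconnected (h : IsKVertexCritical G k) : G.Preconnected := by
  classical
  intro x y
  by_contra hxy
  obtain ⟨c₁⟩ := h.colorable_induce_compl y
  obtain ⟨c₂⟩ := h.colorable_induce_compl x
  -- colour the component of `x` as in `G - y` and everything else as in `G - x`
  refine h.not_colorable x ⟨Coloring.mk (fun w => if hw : G.Reachable x w
      then c₁ ⟨w, fun hwy => hxy (hwy ▸ hw)⟩
      else c₂ ⟨w, fun hwx => hw (by rw [hwx])⟩) ?_⟩
  intro a b hab
  by_cases ha : G.Reachable x a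
  · have hb : G.Reachable x b := ha.trans hab.reachable
    simpa [ha, hb] using c₁.valid (by simpa using hab)
  · have hb : ¬G.Reachable x b := fun hb => ha (hb.trans hab.symm.reachable)
    simpa [ha, hb] using c₂.valid (by simpa using hab)

end IsKVertexCritical

def edgeAndOpposite (i : Fin 5) : Finset (Fin 5) := {i, i + 1, i + 3}

theorem exists_forall_iff_mem_edgeAndOpposite : ∀ b : Fin 5 → Bool, (∃ i, b i) →
    (∀ i, b i → b (i + 1) → ¬b (i + 2)) →
    (∀ i, b i → (b (i + 1) ∨ b (i + 2)) ∧ (b (i + 4) ∨ b (i + 3))) →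
    ∃ i, ∀ j, b j ↔ j ∈ edgeAndOpposite i := by
  decide

theorem exists_not_cycleGraph_adj_iff_mem_edgeAndOpposite (m i : Fin 5) :
    ∃ j, ¬((cycleGraph 5).Adj m j ↔ j ∈ edgeAndOpposite i) := by
  decide +revert

/-- Each alternative yields a diamond on two adjacent vertices of types `i` and `i'` and one or
two cycle vertices. -/
theorem edgeAndOpposite_inter_edgeAndOpposite (i i' : Fin 5) :
    ∃ a ∈ edgeAndOpposite i ∩ edgeAndOpposite i', ∃ b,
      (b ∈ edgeAndOpposite i ∩ edgeAndOpposite i' ∧ a ≠ b ∧ ¬(cycleGraph 5).Adj a b) ∨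
      ((cycleGraph 5).Adj a b ∧ b ∈ edgeAndOpposite i \ edgeAndOpposite i') ∨
      ((cycleGraph 5).Adj a b ∧ b ∈ edgeAndOpposite i' \ edgeAndOpposite i) := by
  decide +revert

section InducedFiveCycle

variable {V : Type*} {G : SimpleGraph V} (e : cycleGraph 5 ↪g G)

def SeesEdgeAndOpposite (s : V) (i : Fin 5) : Prop :=
  ∀ j, G.Adj s (e j) ↔ j ∈ edgeAndOpposite i

variable {e}

theorem notMem_range_of_forall_not_adj {z : V} (hz : ∀ j, ¬G.Adj z (e j)) :
    z ∉ Set.range e := by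
  rintro ⟨m, rfl⟩
  exact hz (m + 1) (e.map_adj_iff.2 (by fin_cases m <;> decide))

theorem false_of_adj_three_consecutive (hdia : SGFree G diamond) {x : V} {i : Fin 5}
    (h₀ : G.Adj x (e i)) (h₁ : G.Adj x (e (i + 1))) (h₂ : G.Adj x (e (i + 2))) : False :=
  hdia.false_of_inducedDiamond (e.injective.ne (by fin_cases i <;> decide))
    (mt e.map_adj_iff.1 (by fin_cases i <;> decide)) h₀.symm
    (e.map_adj_iff.2 (by fin_cases i <;> decide)) h₂.symm
    (e.map_adj_iff.2 (by fin_cases i <;> decide)) h₁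

/-- Rules out a vertex at distance three from the cycle: the path `w y x` continues along the
cycle to an induced `P5` unless `x` sees three consecutive cycle vertices. -/
theorem false_of_adj_of_adj_of_adj (hP5 : SGFree G (pathGraph 5)) (hdia : SGFree G diamond)
    {w y x : V} {i : Fin 5} (hwy : G.Adj w y) (hyx : G.Adj y x) (hxi : G.Adj x (e i))
    (hwx : ¬G.Adj w x) (hw : ∀ j, ¬G.Adj w (e j)) (hy : ∀ j, ¬G.Adj y (e j)) : False := by
  by_cases hx₁ : G.Adj x (e (i + 1))
  · by_cases hx₂ : G.Adj x (e (i + 2))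
    · exact false_of_adj_three_consecutive hdia hxi hx₁ hx₂
    · exact hP5.false_of_inducedPath hwy hyx hx₁ (e.map_adj_iff.2 (by fin_cases i <;> decide))
        hwx (hw _) (hw _) (hy _) (hy _) hx₂
  · exact hP5.false_of_inducedPath hwy hyx hxi (e.map_adj_iff.2 (by fin_cases i <;> decide))
      hwx (hw _) (hw _) (hy _) (hy _) hx₁

theorem exists_adj_adj_apply (hP5 : SGFree G (pathGraph 5)) (hdia : SGFree G diamond)
    (hconn : G.Preconnected) {z : V} (hz : ∀ j, ¬G.Adj z (e j)) :
    ∃ s i, G.Adj z s ∧ G.Adj s (e i) := by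
  by_contra! hfar
  -- the vertices at distance at most one from the cycle, and at most two
  set N₁ : Set V := {x | x ∈ Set.range e ∨ ∃ j, G.Adj x (e j)}
  set N₂ : Set V := {u | u ∈ Set.range e ∨ ∃ x ∈ N₁, G.Adj u x}
  have hzN₂ : z ∉ N₂ := by
    rintro (hzC | ⟨x, (⟨j, rfl⟩ | ⟨j, hxj⟩), hzx⟩)
    exacts [notMem_range_of_forall_not_adj hz hzC, hz j hzx, hfar x j hzx hxj]
  obtain ⟨⟨⟨y, w⟩, hyw⟩, -, hyN₂, hwN₂⟩ :=
    (hconn (e 0) z).some.exists_boundary_dart N₂ (.inl ⟨0, rfl⟩) hzN₂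
  simp only [N₂, Set.mem_ofPred_eq, not_or, not_exists, not_and] at hyN₂ hwN₂
  have hyN₁ : y ∉ N₁ := fun hy => hwN₂.2 y hy hyw.symm
  simp only [N₁, Set.mem_ofPred_eq, not_or, not_exists] at hyN₁
  obtain ⟨x, hxN₁, hyx⟩ := hyN₂.resolve_left hyN₁.1
  obtain ⟨j, hxj⟩ := hxN₁.resolve_left fun ⟨m, hm⟩ => hyN₁.2 m (hm ▸ hyx)
  exact false_of_adj_of_adj_of_adj hP5 hdia hyw.symm hyx hxj (hwN₂.2 x hxN₁)
    (fun m hwm => hwN₂.2 (e m) (.inl ⟨m, rfl⟩) hwm) hyN₁.2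

theorem exists_seesEdgeAndOpposite (hP5 : SGFree G (pathGraph 5)) (hdia : SGFree G diamond)
    {z s : V} (hzs : G.Adj z s) (hz : ∀ j, ¬G.Adj z (e j)) (hs : ∃ j, G.Adj s (e j)) :
    ∃ i, SeesEdgeAndOpposite e s i := by
  classical
  set b : Fin 5 → Bool := fun j => G.Adj s (e j)
  have hb : ∀ j, b j ↔ G.Adj s (e j) := by simp [b]
  simp only [← hb] at hs
  have no_three : ∀ i, b i → b (i + 1) → ¬b (i + 2) := by
    simp only [hb]
    exact fun i => false_of_adj_three_consecutive hdia
  -- otherwise `z s vᵢ vᵢ₊₁ vᵢ₊₂`, resp. `z s vᵢ vᵢ₋₁ vᵢ₋₂`, is an induced `P5`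
  have continues : ∀ i, b i → (b (i + 1) ∨ b (i + 2)) ∧ (b (i + 4) ∨ b (i + 3)) := by
    intro i hi
    simp only [hb] at hi ⊢
    constructor <;> by_contra! hno
    · exact hP5.false_of_inducedPath hzs hi (e.map_adj_iff.2 (by fin_cases i <;> decide))
        (e.map_adj_iff.2 (by fin_cases i <;> decide)) (hz i) (hz _) (hz _) hno.1 hno.2
        (mt e.map_adj_iff.1 (by fin_cases i <;> decide))
    · exact hP5.false_of_inducedPath hzs hi (e.map_adj_iff.2 (by fin_cases i <;> decide))
        (e.map_adj_iff.2 (by fin_cases i <;> decide)) (hz i) (hz _) (hz _) hno.1 hno.2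
        (mt e.map_adj_iff.1 (by fin_cases i <;> decide))
  obtain ⟨i, hi⟩ := exists_forall_iff_mem_edgeAndOpposite b hs no_three continues
  exact ⟨i, fun j => (hb j).symm.trans (hi j)⟩

theorem exists_adj_seesEdgeAndOpposite (hP5 : SGFree G (pathGraph 5))
    (hdia : SGFree G diamond) (hconn : G.Preconnected) {z : V} (hz : ∀ j, ¬G.Adj z (e j)) :
    ∃ s i, G.Adj z s ∧ SeesEdgeAndOpposite e s i := by
  obtain ⟨s, j, hzs, hsj⟩ := exists_adj_adj_apply hP5 hdia hconn hz
  obtain ⟨i, hs⟩ := exists_seesEdgeAndOpposite hP5 hdia hzs hz ⟨j, hsj⟩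
  exact ⟨s, i, hzs, hs⟩

namespace SeesEdgeAndOpposite

variable {s s' : V} {i i' : Fin 5}

theorem ne_apply (hs : SeesEdgeAndOpposite e s i) (m : Fin 5) : s ≠ e m := by
  rintro rfl
  obtain ⟨j, hj⟩ := exists_not_cycleGraph_adj_iff_mem_edgeAndOpposite m i
  exact hj (e.map_adj_iff.symm.trans (hs j))

theorem not_adj (hdia : SGFree G diamond) (hs : SeesEdgeAndOpposite e s i)
    (hs' : SeesEdgeAndOpposite e s' i') : ¬G.Adj s s' := by
  intro hss'
  obtain ⟨a, ha, b, hab⟩ := edgeAndOpposite_inter_edgeAndOpposite i i'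
  simp only [Finset.mem_inter, Finset.mem_sdiff] at ha hab
  rcases hab with ⟨hb, hab, hnab⟩ | ⟨hab, hb, hb'⟩ | ⟨hab, hb, hb'⟩
  · exact hdia.false_of_inducedDiamond (e.injective.ne hab) (mt e.map_adj_iff.1 hnab)
      ((hs a).2 ha.1).symm ((hs' a).2 ha.2).symm ((hs b).2 hb.1).symm ((hs' b).2 hb.2).symm hss'
  · exact hdia.false_of_inducedDiamond (hs'.ne_apply b) (mt (hs' b).1 hb') hss'.symm
      ((hs' a).2 ha.2) ((hs b).2 hb).symm (e.map_adj_iff.2 hab.symm) ((hs a).2 ha.1)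
  · exact hdia.false_of_inducedDiamond (hs.ne_apply b) (mt (hs b).1 hb') hss'
      ((hs a).2 ha.1) ((hs' b).2 hb).symm (e.map_adj_iff.2 hab.symm) ((hs' a).2 ha.2)

theorem unique (hdia : SGFree G diamond) (hs : SeesEdgeAndOpposite e s i)
    (hs' : SeesEdgeAndOpposite e s' i) : s = s' := by
  by_contra hne
  exact hdia.false_of_inducedDiamond hne (hs.not_adj hdia hs')
    ((hs i).2 (by simp [edgeAndOpposite])) ((hs (i + 1)).2 (by simp [edgeAndOpposite]))
    ((hs' i).2 (by simp [edgeAndOpposite])) ((hs' (i + 1)).2 (by simp [edgeAndOpposite]))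
    (e.map_adj_iff.2 (by fin_cases i <;> decide))

/-- Otherwise `vᵢ₊₂ vᵢ₊₁ s z w` is an induced `P5`. -/
theorem adj_of_adj (hP5 : SGFree G (pathGraph 5)) (hs : SeesEdgeAndOpposite e s i)
    {z w : V} (hzs : G.Adj z s) (hzw : G.Adj z w) (hz : ∀ j, ¬G.Adj z (e j))
    (hw : ∀ j, ¬G.Adj w (e j)) : G.Adj w s := by
  by_contra hws
  exact hP5.false_of_inducedPath (e.map_adj_iff.2 (by fin_cases i <;> decide))
    ((hs (i + 1)).2 (by simp [edgeAndOpposite])).symm hzs.symm hzw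
    (fun h => (by fin_cases i <;> decide : i + 2 ∉ edgeAndOpposite i) ((hs _).1 h.symm))
    (fun h => hz _ h.symm) (fun h => hw _ h.symm) (fun h => hz _ h.symm)
    (fun h => hw _ h.symm) (fun h => hws h.symm)

end SeesEdgeAndOpposite

end InducedFiveCycle

section OffCycle

variable {V : Type*} {G : SimpleGraph V} {k : ℕ} {e : cycleGraph 5 ↪g G}

/-- Were `z₁ z₂` an edge, every neighbour `x ≠ s` of `z₁` would miss the cycle (else
`s x z₁ z₂` is a diamond), so the neighbourhood of `z₁` would be a clique. -/
theorem IsKVertexCritical.not_adj_of_forall_not_adj_apply [Fintype V]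
    (hcrit : IsKVertexCritical G k) (hP5 : SGFree G (pathGraph 5)) (hdia : SGFree G diamond)
    {z₁ z₂ : V} (hz₁ : ∀ j, ¬G.Adj z₁ (e j)) (hz₂ : ∀ j, ¬G.Adj z₂ (e j)) :
    ¬G.Adj z₁ z₂ := by
  intro h₁₂
  obtain ⟨s, i, hz₁s, hs⟩ := exists_adj_seesEdgeAndOpposite hP5 hdia hcrit.preconnected hz₁
  have hoff : ∀ x, G.Adj z₁ x → x ≠ s → ∀ j, ¬G.Adj x (e j) := by
    intro x hz₁x hxs j hxj
    obtain ⟨ix, hx⟩ := exists_seesEdgeAndOpposite hP5 hdia hz₁x hz₁ ⟨j, hxj⟩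
    exact hdia.false_of_inducedDiamond (Ne.symm hxs) (hs.not_adj hdia hx) hz₁s.symm
      (hs.adj_of_adj hP5 hz₁s h₁₂ hz₁ hz₂).symm hz₁x.symm
      (hx.adj_of_adj hP5 hz₁x h₁₂ hz₁ hz₂).symm h₁₂
  have hcl : G.IsClique (G.neighborSet z₁) := hdia.isClique_neighborSet hz₁s
    fun w hz₁w hws => hs.adj_of_adj hP5 hz₁s hz₁w hz₁ (hoff w hz₁w hws)
  have h₀ : e 0 ≠ z₁ := fun h => notMem_range_of_forall_not_adj hz₁ ⟨0, h⟩
  exact hz₁ 0 (hcrit.adj_of_isClique_neighborSet hcl h₀)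

variable (e) in
def neighborTypes (z : V) : Set (Fin 5) := {i | ∃ s, G.Adj z s ∧ SeesEdgeAndOpposite e s i}

theorem IsKVertexCritical.injOn_neighborTypes [Fintype V] (hcrit : IsKVertexCritical G k)
    (hP5 : SGFree G (pathGraph 5)) (hdia : SGFree G diamond) :
    Set.InjOn (neighborTypes e) {z | ∀ j, ¬G.Adj z (e j)} := by
  intro z hz z' hz' hzz'
  by_contra hne
  obtain ⟨s, hzs, hz's⟩ := hcrit.exists_adj_not_adj hne
  have hsC : ∃ j, G.Adj s (e j) := by
    by_contra! hs
    exact hcrit.not_adj_of_forall_not_adj_apply hP5 hdia hz hs hzs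
  obtain ⟨i, hs⟩ := exists_seesEdgeAndOpposite hP5 hdia hzs hz hsC
  obtain ⟨s', hz's', hs'⟩ : i ∈ neighborTypes e z' := hzz' ▸ ⟨s, hzs, hs⟩
  exact hz's (hs.unique hdia hs' ▸ hz's')

end OffCycle

theorem stmt_19_general (k : ℕ) {V : Type} [Fintype V] (G : SimpleGraph V)
    (hcrit : IsKVertexCritical G k)
    (hP5 : SGFree G (pathGraph 5))
    (hdiamond : SGFree G diamond)
    (v : Fin 5 → V) (hv : Function.Injective v)
    (hadj : ∀ i j : Fin 5, G.Adj (v i) (v j) ↔ (j = i + 1 ∨ i = j + 1))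
    (Z : Set V)
    (hZ : ∀ x : V, x ∈ Z ↔ x ∉ Set.range v ∧ ∀ j : Fin 5, ¬ G.Adj x (v j)) :
    Z.Pairwise (fun a b => ¬ G.Adj a b) ∧ Z.ncard ≤ 32 := by
  let e : cycleGraph 5 ↪g G :=
    ⟨⟨v, hv⟩, fun {i j} => (hadj i j).trans (by revert i j; decide)⟩
  have hZe : Z = {z | ∀ j, ¬G.Adj z (e j)} := Set.ext fun z =>
    (hZ z).trans (and_iff_right_of_imp (notMem_range_of_forall_not_adj (e := e)))
  refine ⟨fun z hz z' hz' _ => ?_, ?_⟩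
  · rw [hZe] at hz hz'
    exact hcrit.not_adj_of_forall_not_adj_apply hP5 hdiamond hz hz'
  · calc Z.ncard ≤ (Set.univ : Set (Set (Fin 5))).ncard :=
          Set.ncard_le_ncard_of_injOn _ (fun _ _ => Set.mem_univ _)
            (hZe ▸ hcrit.injOn_neighborTypes hP5 hdiamond) Set.finite_univ
      _ = 32 := by simp [Set.ncard_univ, Nat.card_eq_fintype_card]

/-- In a `k`-vertex-critical `(P5, diamond)`-free graph with an induced 5-cycle
`v₁,…,v₅`, the set `Z` of vertices outside the cycle with no neighbor on the cycle is
an independent set of size at most 32. -/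
theorem stmt_19 (k : ℕ) (hk : 1 ≤ k) {V : Type} [Fintype V] (G : SimpleGraph V)
    (hcrit : IsKVertexCritical G k)
    (hP5 : SGFree G (pathGraph 5))
    (hdiamond : SGFree G diamond)
    (v : Fin 5 → V) (hv : Function.Injective v)
    (hadj : ∀ i j : Fin 5, G.Adj (v i) (v j) ↔ (j = i + 1 ∨ i = j + 1))
    (Z : Set V)
    (hZ : ∀ x : V, x ∈ Z ↔ x ∉ Set.range v ∧ ∀ j : Fin 5, ¬ G.Adj x (v j)) :
    Z.Pairwise (fun a b => ¬ G.Adj a b) ∧ Z.ncard ≤ 32 :=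
  stmt_19_general k G hcrit hP5 hdiamond v hv hadj Z hZ
end
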